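/- arXiv:2201.02745 — 3 statements merged into one kernel-verified Lean document; each statement's English description precedes it below -/
import Mathlib

section
/- Let D ∈ ℝ^{M₁×M₂} have rank r_d and compact SVD D = UΣVᵀ, where U ∈ ℝ^{M₁×r_d} has orthonormal columns, Σ ∈ ℝ^{r_d×r_d} is diagonal with positive diagonal entries, and V ∈ ℝ^{M₂×r_d} has orthonormal columns; let v^i ∈ ℝ^{r_d} denote the i-th row of V and d_i the i-th column of D, and assume every column of D is nonzero. If C* ∈ ℝ^{M₁×M₂} is an optimal point of the problem min_C Σ_{i=1}^{M₂} ‖Dᵀc_i‖₂ subject to c_iᵀd_i = 1 for all i (c_i the i-th column of C), and A = |DᵀC*| (entrywise absolute value), then A(j,i) = |⟨v^j, v^i⟩| / ‖v^i‖₂² for all i, j. -/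
/-!
Write `Dᵀ = V M` with `M = Σ Uᵀ`; `M` is onto because `U` has orthonormal columns and `Σ` is
invertible, and `V` is an isometry. So `‖Dᵀ c‖₂ = ‖M c‖₂` and `cᵀ dᵢ = ⟨vⁱ, M c⟩`. The problem
decouples over columns, hence `y = M cᵢ*` is the point of least norm on the hyperplane
`⟨vⁱ, y⟩ = 1`, namely `vⁱ / ‖vⁱ‖₂²`, and `(DᵀC*)(j,i) = ⟨vʲ, y⟩ = ⟨vʲ, vⁱ⟩ / ‖vⁱ‖₂²`.
-/

open Matrix Finset MeasureTheory ProbabilityTheory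

noncomputable section

namespace Paper

instance {m n α : Type*} [MeasurableSpace α] : MeasurableSpace (Matrix m n α) :=
  MeasurableSpace.pi

/-- Euclidean (`ℓ₂`) norm of a vector. -/
def enorm {ι : Type*} [Fintype ι] (v : ι → ℝ) : ℝ := Real.sqrt (∑ i, v i ^ 2)

/-- `ℓ_p` norm of a vector. -/
def pnorm {ι : Type*} [Fintype ι] (p : ℝ) (v : ι → ℝ) : ℝ := (∑ i, |v i| ^ p) ^ (1 / p)

/-- Spectral norm (largest singular value) of a real matrix. -/
def spec {a b : Type*} [Fintype a] [Fintype b] (M : Matrix a b ℝ) : ℝ :=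
  ⨆ v : { v : b → ℝ // enorm v = 1 }, enorm (M.mulVec v.1)

/-- Smallest singular value of a real matrix. -/
def smin {a b : Type*} [Fintype a] [Fintype b] (M : Matrix a b ℝ) : ℝ :=
  ⨅ v : { v : b → ℝ // enorm v = 1 }, enorm (M.mulVec v.1)

/-- Column space (span of the columns) of a matrix. -/
def colSpan {a b : Type*} (M : Matrix a b ℝ) : Submodule ℝ (a → ℝ) :=
  Submodule.span ℝ (Set.range Mᵀ)

/-- Requirement 1 with parameters `κ` and `p`; the columns of the data matrix are indexed by
`Fin m × Fin n`, the first coordinate being the cluster index. -/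
def Req1 {m n : ℕ} (A : Matrix (Fin m × Fin n) (Fin m × Fin n) ℝ) (κ p : ℝ) : Prop :=
  ∀ i : Fin m × Fin n,
    κ / ((m : ℝ) - 1) * ∑ j ∈ univ.filter (fun j : Fin m × Fin n => j.1 ≠ i.1), |A j i| ^ p
      < ∑ j ∈ univ.filter (fun j : Fin m × Fin n => j.1 = i.1), |A j i| ^ p

/-- Feasibility for the direction-search problem: `cᵢᵀ dᵢ = 1` for every column. -/
def Feasible {a ι : Type*} [Fintype a] [Fintype ι] (D C : Matrix a ι ℝ) : Prop :=
  ∀ i, dotProduct (Cᵀ i) (Dᵀ i) = 1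

/-- Optimal point of `min_C ∑ᵢ ‖Dᵀ cᵢ‖_p  s.t.  cᵢᵀ dᵢ = 1`. -/
def IsOptimal {a ι : Type*} [Fintype a] [Fintype ι] (p : ℝ) (D C : Matrix a ι ℝ) : Prop :=
  Feasible D C ∧ ∀ C' : Matrix a ι ℝ, Feasible D C' →
    ∑ i, pnorm p (Dᵀ.mulVec (Cᵀ i)) ≤ ∑ i, pnorm p (Dᵀ.mulVec (C'ᵀ i))

/-- Optimal point of `min_C ∑ᵢ ‖Dᵀ cᵢ‖₂  s.t.  cᵢᵀ dᵢ = 1`. -/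
def IsOptimal2 {a ι : Type*} [Fintype a] [Fintype ι] (D C : Matrix a ι ℝ) : Prop :=
  Feasible D C ∧ ∀ C' : Matrix a ι ℝ, Feasible D C' →
    ∑ i, enorm (Dᵀ.mulVec (Cᵀ i)) ≤ ∑ i, enorm (Dᵀ.mulVec (C'ᵀ i))

/-- The adjacency matrix `A = |Dᵀ C|`. -/
def adjacency {a ι : Type*} [Fintype a] [Fintype ι] (D C : Matrix a ι ℝ) : Matrix ι ι ℝ :=
  Matrix.of fun j i => |(Dᵀ * C) j i|

/-- `Δ_min`: the permeance statistic of the clusters. -/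
def Dmin {M₁ m n s rs : ℕ} (D : Matrix (Fin M₁) (Fin m × Fin n) ℝ)
    (Smat : Matrix (Fin M₁) (Fin s) ℝ) (Ud : Fin m → Matrix (Fin M₁) (Fin rs) ℝ)
    (p : ℝ) : ℝ :=
  ⨅ j : Fin m, ⨅ u : { u : Fin M₁ → ℝ // u ∈ colSpan Smat ⊔ colSpan (Ud j) ∧ enorm u = 1 },
    ∑ t : Fin n, |dotProduct u.1 (Dᵀ (j, t))| ^ p

/-- `Δ̇_max`. -/
def Ddotmax {M₁ m n rs : ℕ} (D : Matrix (Fin M₁) (Fin m × Fin n) ℝ)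
    (Ud : Fin m → Matrix (Fin M₁) (Fin rs) ℝ) (p : ℝ) : ℝ :=
  ⨆ j : Fin m, ⨆ u : { u : Fin rs → ℝ // enorm u = 1 },
    ∑ t : Fin n, |dotProduct u.1 ((Ud j)ᵀ.mulVec (Dᵀ (j, t)))| ^ p

/-- `Δ̄_max`. -/
def Dbarmax {M₁ m n s : ℕ} (D : Matrix (Fin M₁) (Fin m × Fin n) ℝ)
    (Smat : Matrix (Fin M₁) (Fin s) ℝ) (p : ℝ) : ℝ :=
  ⨆ j : Fin m, ⨆ u : { u : Fin s → ℝ // enorm u = 1 },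
    ∑ t : Fin n, |dotProduct u.1 (Smatᵀ.mulVec (Dᵀ (j, t)))| ^ p

/-- `φ = max_{j ≠ t} ‖U̇ₜᵀ U̇ⱼ‖`. -/
def phi {M₁ m rs : ℕ} (Ud : Fin m → Matrix (Fin M₁) (Fin rs) ℝ) : ℝ :=
  ⨆ j : Fin m, ⨆ t : Fin m, if j ≠ t then spec ((Ud t)ᵀ * Ud j) else 0

/-- `z_{δ,x}`. -/
def zd (m n : ℕ) (δ x : ℝ) : ℝ :=
  1 + 2 * Real.sqrt (1 / x * Real.log (2 * n * m / δ)) + 2 / x * Real.log (2 * n * m / δ)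

/-- `η_{δ,x}`. -/
def etad (m n : ℕ) (δ x : ℝ) : ℝ :=
  max (4 * zd m n δ x / 3 * Real.log (2 * x * m / δ))
    (Real.sqrt (4 * n * (x + 3) / x ^ 2 * Real.log (2 * x * m / δ)))

/-- `σ_l(x/y, δ)`. -/
def sigl (M₂ : ℕ) (δ x y : ℝ) : ℝ :=
  (x - 2 * Real.sqrt (x * Real.log (2 * M₂ / δ))) /
    (y + 2 * Real.sqrt ((y - x) * Real.log (2 * M₂ / δ)) + 2 * Real.log (2 * M₂ / δ)
      - 2 * Real.sqrt (x * Real.log (2 * M₂ / δ)))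

/-- `σ_u(x/y, δ)`. -/
def sigu (M₂ : ℕ) (δ x y : ℝ) : ℝ :=
  (x + 2 * Real.sqrt (x * Real.log (2 * M₂ / δ)) + 2 * Real.log (2 * M₂ / δ)) /
    (y + 2 * Real.sqrt (x * Real.log (2 * M₂ / δ)) + 2 * Real.log (2 * M₂ / δ)
      - 2 * Real.sqrt ((y - x) * Real.log (2 * M₂ / δ)))

/-- `c_δ` of Theorems 3 and 8. -/
def cdel (M₁ m r s : ℕ) (δ : ℝ) : ℝ :=
  3 * max 1 (max (Real.sqrt (8 * M₁ * Real.pi / (((M₁ : ℝ) - 1) * ((r : ℝ) - s))))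
    (Real.sqrt (16 * M₁ * Real.log (m * r / δ) / (((M₁ : ℝ) - 1) * ((r : ℝ) - s)))))

lemma enorm_eq_sqrt_dotProduct {ι : Type*} [Fintype ι] (v : ι → ℝ) : enorm v = √(v ⬝ᵥ v) := by
  simp only [enorm, dotProduct, sq]

lemma dotProduct_self_nonneg {R ι : Type*} [Ring R] [LinearOrder R] [IsStrictOrderedRing R]
    [Fintype ι] (v : ι → R) : 0 ≤ v ⬝ᵥ v :=
  Finset.sum_nonneg fun i _ => mul_self_nonneg (v i)

lemma enorm_sq {ι : Type*} [Fintype ι] (v : ι → ℝ) : enorm v ^ 2 = v ⬝ᵥ v := by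
  rw [enorm_eq_sqrt_dotProduct, Real.sq_sqrt (dotProduct_self_nonneg v)]

lemma dotProduct_mulVec_self_of_transpose_mul_self_eq_one {R m n : Type*} [CommSemiring R]
    [Fintype m] [Fintype n] [DecidableEq n] {V : Matrix m n R} (hV : Vᵀ * V = 1) (y : n → R) :
    (V *ᵥ y) ⬝ᵥ (V *ᵥ y) = y ⬝ᵥ y := by
  rw [dotProduct_mulVec, ← vecMul_transpose, vecMul_vecMul, hV, vecMul_one]

lemma enorm_mulVec_of_transpose_mul_self_eq_one {m n : Type*} [Fintype m] [Fintype n]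
    [DecidableEq n] {V : Matrix m n ℝ} (hV : Vᵀ * V = 1) (y : n → ℝ) :
    enorm (V *ᵥ y) = enorm y := by
  rw [enorm_eq_sqrt_dotProduct, enorm_eq_sqrt_dotProduct,
    dotProduct_mulVec_self_of_transpose_mul_self_eq_one hV]

lemma dotProduct_self_ne_zero_of_dotProduct_eq_one {R ι : Type*} [Ring R] [LinearOrder R]
    [IsStrictOrderedRing R] [Fintype ι] {a y : ι → R} (hay : a ⬝ᵥ y = 1) : a ⬝ᵥ a ≠ 0 := by
  rintro hs
  rw [dotProduct_self_eq_zero.1 hs, zero_dotProduct] at hay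
  exact zero_ne_one hay

lemma eq_smul_of_dotProduct_eq_one_of_dotProduct_self_le {K ι : Type*} [Field K] [LinearOrder K]
    [IsStrictOrderedRing K] [Fintype ι] {a y : ι → K}
    (hay : a ⬝ᵥ y = 1) (hy : y ⬝ᵥ y ≤ (a ⬝ᵥ a)⁻¹) : y = (a ⬝ᵥ a)⁻¹ • a := by
  set s := a ⬝ᵥ a
  have hs : s ≠ 0 := dotProduct_self_ne_zero_of_dotProduct_eq_one hay
  have hdist : (y - s⁻¹ • a) ⬝ᵥ (y - s⁻¹ • a) = y ⬝ᵥ y - s⁻¹ := by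
    simp only [sub_dotProduct, dotProduct_sub, smul_dotProduct, dotProduct_smul, smul_eq_mul,
      dotProduct_comm y a, hay]
    field_simp
    ring
  have hnonneg := dotProduct_self_nonneg (y - s⁻¹ • a)
  rw [← sub_eq_zero, ← dotProduct_self_eq_zero]
  linarith

lemma IsOptimal2.enorm_col_le {a ι : Type*} [Fintype a] [Fintype ι] [DecidableEq ι]
    {D C : Matrix a ι ℝ} (hC : IsOptimal2 D C) (i : ι) {c : a → ℝ} (hc : c ⬝ᵥ Dᵀ i = 1) :
    enorm (Dᵀ *ᵥ Cᵀ i) ≤ enorm (Dᵀ *ᵥ c) := by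
  set C' : Matrix a ι ℝ := (Cᵀ.updateRow i c)ᵀ
  have hC' : C'ᵀ = Cᵀ.updateRow i c := transpose_transpose _
  have hfeas : Feasible D C' := by
    intro k
    rw [hC']
    rcases eq_or_ne k i with rfl | hk
    · rwa [updateRow_self]
    · rw [updateRow_ne hk]
      exact hC.1 k
  have hrest : ∑ k ∈ univ.erase i, enorm (Dᵀ *ᵥ C'ᵀ k) = ∑ k ∈ univ.erase i, enorm (Dᵀ *ᵥ Cᵀ k) :=
    Finset.sum_congr rfl fun k hk => by rw [hC', updateRow_ne (Finset.ne_of_mem_erase hk)]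
  have hsum := hC.2 C' hfeas
  rw [← Finset.add_sum_erase _ _ (Finset.mem_univ i),
    ← Finset.add_sum_erase _ _ (Finset.mem_univ i), hrest, hC', updateRow_self] at hsum
  linarith

lemma IsOptimal2.mulVec_col_eq {a ι r : Type*} [Fintype a] [Fintype ι] [Fintype r]
    [DecidableEq ι] [DecidableEq r] {D C : Matrix a ι ℝ} {V : Matrix ι r ℝ} {M : Matrix r a ℝ}
    (hD : Dᵀ = V * M) (hV : Vᵀ * V = 1) (hM : Function.Surjective M.mulVec)
    (hC : IsOptimal2 D C) (i : ι) :
    M *ᵥ Cᵀ i = (V i ⬝ᵥ V i)⁻¹ • V i := by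
  have hmulVec (c : a → ℝ) : Dᵀ *ᵥ c = V *ᵥ (M *ᵥ c) := by rw [hD, mulVec_mulVec]
  have hconstr (c : a → ℝ) : c ⬝ᵥ Dᵀ i = V i ⬝ᵥ (M *ᵥ c) := by
    rw [dotProduct_comm]
    exact congrFun (hmulVec c) i
  have hfeas : V i ⬝ᵥ (M *ᵥ Cᵀ i) = 1 := (hconstr _).symm.trans (hC.1 i)
  have hs := dotProduct_self_ne_zero_of_dotProduct_eq_one hfeas
  obtain ⟨c₀, hc₀⟩ := hM ((V i ⬝ᵥ V i)⁻¹ • V i)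
  have hle := hC.enorm_col_le i (c := c₀) (by
    rw [hconstr, hc₀, dotProduct_smul, smul_eq_mul, inv_mul_cancel₀ hs])
  rw [hmulVec, hmulVec, enorm_mulVec_of_transpose_mul_self_eq_one hV,
    enorm_mulVec_of_transpose_mul_self_eq_one hV, hc₀] at hle
  refine eq_smul_of_dotProduct_eq_one_of_dotProduct_self_le hfeas ?_
  calc M *ᵥ Cᵀ i ⬝ᵥ M *ᵥ Cᵀ i = enorm (M *ᵥ Cᵀ i) ^ 2 := (enorm_sq _).symm
    _ ≤ enorm ((V i ⬝ᵥ V i)⁻¹ • V i) ^ 2 := pow_le_pow_left₀ (Real.sqrt_nonneg _) hle 2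
    _ = (V i ⬝ᵥ V i)⁻¹ := by
      rw [enorm_sq, smul_dotProduct, dotProduct_smul, smul_eq_mul, smul_eq_mul]
      field_simp

theorem statement0_general (M₁ M₂ rd : ℕ)
    (D : Matrix (Fin M₁) (Fin M₂) ℝ) (U : Matrix (Fin M₁) (Fin rd) ℝ)
    (σ : Fin rd → ℝ) (V : Matrix (Fin M₂) (Fin rd) ℝ)
    (hsvd : D = U * Matrix.diagonal σ * Vᵀ)
    (hU : Uᵀ * U = 1) (hV : Vᵀ * V = 1)
    (hσ : ∀ i, 0 < σ i)
    (C : Matrix (Fin M₁) (Fin M₂) ℝ)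
    (hC : IsOptimal2 D C) :
    ∀ i j, adjacency D C j i = |dotProduct (V j) (V i)| / enorm (V i) ^ 2 := by
  intro i j
  set M := diagonal σ * Uᵀ
  have hD : Dᵀ = V * M := by
    rw [hsvd, transpose_mul, transpose_mul, transpose_transpose, diagonal_transpose]
  have hM : Function.Surjective M.mulVec := by
    refine mulVec_surjective_iff_exists_right_inverse.2 ⟨U * diagonal fun k => (σ k)⁻¹, ?_⟩
    rw [Matrix.mul_assoc, ← Matrix.mul_assoc Uᵀ, hU, Matrix.one_mul, diagonal_mul_diagonal]
    simp_rw [mul_inv_cancel₀ (hσ _).ne']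
    exact diagonal_one
  have hentry : (Dᵀ * C) j i = V j ⬝ᵥ V i / (V i ⬝ᵥ V i) := by
    calc (Dᵀ * C) j i = (V *ᵥ (M *ᵥ Cᵀ i)) j := by rw [hD, Matrix.mul_assoc]; rfl
      _ = V j ⬝ᵥ V i / (V i ⬝ᵥ V i) := by
        rw [hC.mulVec_col_eq hD hV hM i, mulVec_smul, Pi.smul_apply, smul_eq_mul, inv_mul_eq_div]
        rfl
  rw [adjacency, of_apply, hentry, enorm_sq, abs_div,
    abs_of_nonneg (dotProduct_self_nonneg (V i))]

/-- if `C*` is an optimal point of `min_C ∑ᵢ ‖Dᵀcᵢ‖₂ s.t. cᵢᵀdᵢ = 1` and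
`A = |DᵀC*|`, then `A(j,i) = |⟨vʲ, vⁱ⟩| / ‖vⁱ‖₂²` where `vⁱ` is the `i`-th row of `V`. -/
theorem statement0 (M₁ M₂ rd : ℕ)
    (D : Matrix (Fin M₁) (Fin M₂) ℝ) (U : Matrix (Fin M₁) (Fin rd) ℝ)
    (σ : Fin rd → ℝ) (V : Matrix (Fin M₂) (Fin rd) ℝ)
    (hrank : D.rank = rd)
    (hsvd : D = U * Matrix.diagonal σ * Vᵀ)
    (hU : Uᵀ * U = 1) (hV : Vᵀ * V = 1)
    (hσ : ∀ i, 0 < σ i)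
    (hcols : ∀ i, Dᵀ i ≠ 0)
    (C : Matrix (Fin M₁) (Fin M₂) ℝ)
    (hC : IsOptimal2 D C) :
    ∀ i j, adjacency D C j i = |dotProduct (V j) (V i)| / enorm (V i) ^ 2 :=
  statement0_general M₁ M₂ rd D U σ V hsvd hU hV hσ C hC

end Paper
end
end

section
/- Let D ∈ ℝ^{M₁×M₂} have rank r_d and compact SVD D = UΣVᵀ, where U ∈ ℝ^{M₁×r_d} has orthonormal columns and Σ ∈ ℝ^{r_d×r_d} is diagonal with positive diagonal entries. Let d be a nonzero column of D. Then the vector c* = (UΣ⁻²Uᵀd)/(dᵀUΣ⁻²Uᵀd) is well defined (the denominator is positive) and is an optimal point of the problem min_c ‖cᵀD‖₂ subject to cᵀd = 1, i.e. c*ᵀd = 1 and ‖c*ᵀD‖₂ ≤ ‖cᵀD‖₂ for every c ∈ ℝ^{M₁} with cᵀd = 1. -/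
open Matrix Finset MeasureTheory ProbabilityTheory

noncomputable section

namespace Paper

/-- the vector `c* = (UΣ⁻²Uᵀd)/(dᵀUΣ⁻²Uᵀd)` is well defined and optimal for
`min_c ‖cᵀD‖₂ s.t. cᵀd = 1`, for `d` a nonzero column of `D`. -/
theorem statement1 (M₁ M₂ rd : ℕ)
    (D : Matrix (Fin M₁) (Fin M₂) ℝ) (U : Matrix (Fin M₁) (Fin rd) ℝ)
    (σ : Fin rd → ℝ) (V : Matrix (Fin M₂) (Fin rd) ℝ)
    (hrank : D.rank = rd)
    (hsvd : D = U * Matrix.diagonal σ * Vᵀ)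
    (hU : Uᵀ * U = 1) (hV : Vᵀ * V = 1)
    (hσ : ∀ i, 0 < σ i)
    (i₀ : Fin M₂) (hd : Dᵀ i₀ ≠ 0) :
    0 < dotProduct (Dᵀ i₀)
        ((U * Matrix.diagonal (fun i => (σ i ^ 2)⁻¹) * Uᵀ).mulVec (Dᵀ i₀)) ∧
    dotProduct
      ((dotProduct (Dᵀ i₀)
          ((U * Matrix.diagonal (fun i => (σ i ^ 2)⁻¹) * Uᵀ).mulVec (Dᵀ i₀)))⁻¹ •
        (U * Matrix.diagonal (fun i => (σ i ^ 2)⁻¹) * Uᵀ).mulVec (Dᵀ i₀)) (Dᵀ i₀) = 1 ∧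
    ∀ c : Fin M₁ → ℝ, dotProduct c (Dᵀ i₀) = 1 →
      enorm (Dᵀ.mulVec
        ((dotProduct (Dᵀ i₀)
            ((U * Matrix.diagonal (fun i => (σ i ^ 2)⁻¹) * Uᵀ).mulVec (Dᵀ i₀)))⁻¹ •
          (U * Matrix.diagonal (fun i => (σ i ^ 2)⁻¹) * Uᵀ).mulVec (Dᵀ i₀)))
        ≤ enorm (Dᵀ.mulVec c) := by
  classical
  set d : Fin M₁ → ℝ := Dᵀ i₀ with hd_def
  set Mm : Matrix (Fin M₁) (Fin M₁) ℝ :=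
    U * Matrix.diagonal (fun i => (σ i ^ 2)⁻¹) * Uᵀ with hM_def
  have hUU : ∀ x : Fin rd → ℝ, Uᵀ.mulVec (U.mulVec x) = x := by
    intro x; rw [Matrix.mulVec_mulVec, hU, Matrix.one_mulVec]
  have hdotU : ∀ (a : Fin rd → ℝ) (u : Fin M₁ → ℝ),
      dotProduct (U.mulVec a) u = dotProduct a (Uᵀ.mulVec u) := by
    intro a u
    rw [dotProduct_comm, Matrix.dotProduct_mulVec, Matrix.mulVec_transpose, dotProduct_comm]
  have hdotV : ∀ (a : Fin rd → ℝ) (u : Fin M₂ → ℝ),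
      dotProduct (V.mulVec a) u = dotProduct a (Vᵀ.mulVec u) := by
    intro a u
    rw [dotProduct_comm, Matrix.dotProduct_mulVec, Matrix.mulVec_transpose, dotProduct_comm]
  set w : Fin rd → ℝ := fun k => V i₀ k with hw_def
  set y : Fin rd → ℝ := fun k => σ k * w k with hy_def
  have hdy : d = U.mulVec y := by
    funext j
    show D j i₀ = _
    rw [hsvd, Matrix.mul_assoc, Matrix.mul_apply]
    simp only [Matrix.diagonal_mul, Matrix.transpose_apply, Matrix.mulVec, dotProduct,
      hy_def, hw_def]
  set s : Fin rd → ℝ := fun k => (σ k)⁻¹ * w k with hs_def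
  have hdiagy : (Matrix.diagonal fun i => (σ i ^ 2)⁻¹).mulVec y = s := by
    funext k
    rw [Matrix.mulVec_diagonal]
    have hσk := (hσ k).ne'
    simp only [hy_def, hs_def]
    field_simp
  have hMd : Mm.mulVec d = U.mulVec s := by
    rw [hdy, hM_def, ← Matrix.mulVec_mulVec, ← Matrix.mulVec_mulVec, hUU, hdiagy]
  set q : ℝ := dotProduct d (Mm.mulVec d) with hq_def
  have hqQ : q = ∑ k, w k ^ 2 := by
    rw [hq_def, hMd, hdy, dotProduct_comm, hdotU, hUU]
    simp only [dotProduct, hs_def, hy_def]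
    refine Finset.sum_congr rfl fun k _ => ?_
    have hσk := (hσ k).ne'
    field_simp
  have hwne : w ≠ 0 := by
    intro hw0
    apply hd
    have : y = 0 := by funext k; simp [hy_def, hw0, Pi.zero_apply]
    show d = 0
    rw [hdy, this, Matrix.mulVec_zero]
  have hqpos : 0 < q := by
    rw [hqQ]
    obtain ⟨k, hk⟩ := Function.ne_iff.mp hwne
    exact Finset.sum_pos' (fun k _ => sq_nonneg _)
      ⟨k, Finset.mem_univ k, sq_pos_of_ne_zero hk⟩
  refine ⟨hqpos, ?_, ?_⟩
  · rw [smul_dotProduct, hMd, hdotU, hdy, hUU, smul_eq_mul]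
    have : dotProduct s y = q := by
      rw [hqQ]
      simp only [dotProduct, hs_def, hy_def]
      refine Finset.sum_congr rfl fun k _ => ?_
      have hσk := (hσ k).ne'
      field_simp
    rw [this, inv_mul_cancel₀ hqpos.ne']
  · intro c hc
    have hDt : Dᵀ = V * Matrix.diagonal σ * Uᵀ := by
      rw [hsvd]; simp [Matrix.transpose_mul, Matrix.diagonal_transpose, Matrix.mul_assoc]
    have hdiagmul : ∀ v : Fin rd → ℝ,
        (Matrix.diagonal σ).mulVec v = fun k => σ k * v k := by
      intro v; funext k; rw [Matrix.mulVec_diagonal]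
    have hDc : ∀ u : Fin M₁ → ℝ,
        Dᵀ.mulVec u = V.mulVec (fun k => σ k * (Uᵀ.mulVec u) k) := by
      intro u
      rw [hDt, ← Matrix.mulVec_mulVec, ← Matrix.mulVec_mulVec, hdiagmul]
    have henV : ∀ a : Fin rd → ℝ, enorm (V.mulVec a) = Real.sqrt (∑ k, a k ^ 2) := by
      intro a
      have : ∑ i, (V.mulVec a i) ^ 2 = ∑ k, a k ^ 2 := by
        have h1 : dotProduct (V.mulVec a) (V.mulVec a) = dotProduct a a := by
          rw [hdotV, Matrix.mulVec_mulVec, hV, Matrix.one_mulVec]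
        simpa [dotProduct, sq] using h1
      rw [enorm, this]
    have hsw : (fun k => σ k * s k) = w := by
      funext k
      have hσk := (hσ k).ne'
      simp only [hs_def]
      field_simp
    have himg : Dᵀ.mulVec (q⁻¹ • Mm.mulVec d) = V.mulVec (q⁻¹ • w) := by
      rw [Matrix.mulVec_smul, hMd, hDc]
      simp only [hUU]
      rw [hsw, Matrix.mulVec_smul]
    set z : Fin rd → ℝ := fun k => σ k * (Uᵀ.mulVec c) k with hz_def
    have hczw : ∑ k, w k * z k = 1 := by
      rw [← hc]
      show _ = dotProduct c d
      rw [hdy, dotProduct_comm, hdotU]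
      simp only [dotProduct, hy_def, hz_def]
      exact Finset.sum_congr rfl fun k _ => by ring
    have hcs : (1 : ℝ) ≤ q * ∑ k, z k ^ 2 := by
      have := Finset.sum_mul_sq_le_sq_mul_sq Finset.univ w z
      rw [hczw] at this
      rw [hqQ]
      simpa using this
    rw [himg, hDc c, henV, henV]
    have hsum : ∑ k, (q⁻¹ • w) k ^ 2 = q⁻¹ := by
      have : ∑ k, (q⁻¹ • w) k ^ 2 = q⁻¹ ^ 2 * ∑ k, w k ^ 2 := by
        rw [Finset.mul_sum]
        exact Finset.sum_congr rfl fun k _ => by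
          simp [Pi.smul_apply, smul_eq_mul, mul_pow]
      rw [this, ← hqQ]
      field_simp
    rw [hsum, Real.sqrt_inv, ← one_div,
      div_le_iff₀ (Real.sqrt_pos.mpr hqpos),
      ← Real.sqrt_mul (by positivity : (0:ℝ) ≤ ∑ k, z k ^ 2)]
    calc (1:ℝ) = Real.sqrt 1 := Real.sqrt_one.symm
    _ ≤ _ := Real.sqrt_le_sqrt (by rw [mul_comm]; exact hcs)

end Paper
end
end

section
/- Suppose D follows Data Model 1 and fix p ≥ 1. For any column d_i of D (with d_i ≠ 0) and any vector c ∈ ℝ^{M₁} with cᵀd_i = 1, it holds that ‖D_{k_i}ᵀ c‖_p^p ≥ Δ_min / ‖d_i‖₂^p. -/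
/-!
Project `c` orthogonally onto `W = S + S_{k_i}`, the span containing every column of `D_{k_i}`.
The projection `v` has the same inner products with these columns as `c`, so `⟪d_i, v⟫ = 1` and
Cauchy–Schwarz gives `‖v‖ ≥ 1 / ‖d_i‖`. The unit vector `v / ‖v‖` of `W` competes in the infimum
defining `Δ_min`, whence `‖D_{k_i}ᵀ c‖_p^p = ‖v‖^p ‖D_{k_i}ᵀ (v / ‖v‖)‖_p^p ≥ Δ_min / ‖d_i‖^p`.
-/

open Matrix Finset MeasureTheory ProbabilityTheory

noncomputable section

namespace Paper

open scoped RealInnerProductSpace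

lemma mulVec_mem_colSpan {a b : Type*} [Fintype b] (M : Matrix a b ℝ) (x : b → ℝ) :
    M *ᵥ x ∈ colSpan M := by
  have h := LinearMap.mem_range_self M.mulVecLin x
  rwa [Matrix.range_mulVecLin] at h

lemma exists_norm_eq_one_inner_eq_mul {E : Type*} [NormedAddCommGroup E] [InnerProductSpace ℝ E]
    (K : Submodule ℝ E) [K.HasOrthogonalProjection] {c d : E} (hd : d ∈ K) (hdc : ⟪d, c⟫ = 1) :
    ∃ u ∈ K, ‖u‖ = 1 ∧ ∃ a, ‖d‖⁻¹ ≤ a ∧ ∀ x ∈ K, ⟪x, c⟫ = a * ⟪x, u⟫ := by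
  set v := K.starProjection c
  have hv : ∀ x ∈ K, ⟪x, c⟫ = ⟪x, v⟫ := fun x hx => by
    rw [← K.inner_starProjection_left_eq_right, K.starProjection_eq_self_iff.mpr hx]
  have hdv : ⟪d, v⟫ = 1 := (hv d hd).symm.trans hdc
  have hv0 : v ≠ 0 := by rintro h; simp [h] at hdv
  have hnv : 0 < ‖v‖ := norm_pos_iff.mpr hv0
  refine ⟨‖v‖⁻¹ • v, K.smul_mem _ (K.starProjection_apply_mem c), ?_, ‖v‖, ?_, fun x hx => ?_⟩
  · rw [norm_smul, norm_inv, norm_norm, inv_mul_cancel₀ hnv.ne']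
  · have hdn : 0 < ‖d‖ := norm_pos_iff.mpr (by rintro rfl; simp at hdv)
    rw [inv_le_iff_one_le_mul₀ hdn, ← hdv]
    exact (real_inner_le_norm d v).trans_eq (mul_comm _ _)
  · rw [hv x hx, real_inner_smul_right, mul_inv_cancel_left₀ hnv.ne']

lemma enorm_eq_norm_toLp {ι : Type*} [Fintype ι] (v : ι → ℝ) : enorm v = ‖WithLp.toLp 2 v‖ := by
  simp [enorm, EuclideanSpace.norm_eq]

lemma dotProduct_eq_inner_toLp {ι : Type*} [Fintype ι] (x y : ι → ℝ) :
    x ⬝ᵥ y = ⟪WithLp.toLp 2 x, WithLp.toLp 2 y⟫ := by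
  simp [EuclideanSpace.inner_toLp_toLp, dotProduct_comm]

lemma exists_enorm_eq_one_dotProduct_eq_mul {ι : Type*} [Fintype ι] (W : Submodule ℝ (ι → ℝ))
    {c d : ι → ℝ} (hd : d ∈ W) (hcd : c ⬝ᵥ d = 1) :
    ∃ u ∈ W, enorm u = 1 ∧ ∃ a, (enorm d)⁻¹ ≤ a ∧ ∀ x ∈ W, x ⬝ᵥ c = a * (u ⬝ᵥ x) := by
  set K := W.comap (WithLp.linearEquiv 2 ℝ (ι → ℝ)).toLinearMap
  have he : ∀ {x}, x ∈ W ↔ WithLp.toLp 2 x ∈ K := Iff.rfl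
  obtain ⟨u, hu, hu1, a, ha, hca⟩ := exists_norm_eq_one_inner_eq_mul K
    (he.mp hd) (by rwa [← dotProduct_eq_inner_toLp, dotProduct_comm])
  refine ⟨u.ofLp, he.mpr hu, by rwa [enorm_eq_norm_toLp], a, by rwa [enorm_eq_norm_toLp], ?_⟩
  intro x hx
  rw [dotProduct_eq_inner_toLp, hca _ (he.mp hx), dotProduct_eq_inner_toLp, real_inner_comm]

lemma Dmin_le {M₁ m n s rs : ℕ} (D : Matrix (Fin M₁) (Fin m × Fin n) ℝ)
    (Smat : Matrix (Fin M₁) (Fin s) ℝ) (Ud : Fin m → Matrix (Fin M₁) (Fin rs) ℝ) (p : ℝ)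
    {j : Fin m} {u : Fin M₁ → ℝ} (hu : u ∈ colSpan Smat ⊔ colSpan (Ud j)) (hu1 : enorm u = 1) :
    Dmin D Smat Ud p ≤ ∑ t : Fin n, |u ⬝ᵥ Dᵀ (j, t)| ^ p := by
  have hnonneg : ∀ v : Fin M₁ → ℝ, ∀ k : Fin m, 0 ≤ ∑ t : Fin n, |v ⬝ᵥ Dᵀ (k, t)| ^ p :=
    fun v k => Finset.sum_nonneg fun t _ => Real.rpow_nonneg (abs_nonneg _) p
  unfold Dmin
  refine (ciInf_le ⟨0, ?_⟩ j).trans ?_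
  · rintro _ ⟨k, rfl⟩
    exact Real.iInf_nonneg fun v => hnonneg v.1 k
  · refine ciInf_le
      (f := fun v : { v : Fin M₁ → ℝ // v ∈ colSpan Smat ⊔ colSpan (Ud j) ∧ enorm v = 1 } =>
        ∑ t : Fin n, |v.1 ⬝ᵥ Dᵀ (j, t)| ^ p) ⟨0, ?_⟩ ⟨u, hu, hu1⟩
    rintro _ ⟨v, rfl⟩
    exact hnonneg v.1 j

theorem statement15_general (M₁ m n r s : ℕ)
    (p : ℝ) (hp : 1 ≤ p)
    (D : Matrix (Fin M₁) (Fin m × Fin n) ℝ)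
    (Smat : Matrix (Fin M₁) (Fin s) ℝ)
    (Ud : Fin m → Matrix (Fin M₁) (Fin (r - s)) ℝ)
    (α : Fin m × Fin n → Fin s → ℝ) (β : Fin m × Fin n → Fin (r - s) → ℝ)
    (hcol : ∀ i : Fin m × Fin n, Dᵀ i = Smat.mulVec (α i) + (Ud i.1).mulVec (β i))
    (i : Fin m × Fin n)
    (c : Fin M₁ → ℝ) (hc : dotProduct c (Dᵀ i) = 1) :
    Dmin D Smat Ud p / enorm (Dᵀ i) ^ p ≤ ∑ t : Fin n, |dotProduct (Dᵀ (i.1, t)) c| ^ p := by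
  have hmem : ∀ t, Dᵀ (i.1, t) ∈ colSpan Smat ⊔ colSpan (Ud i.1) := fun t => by
    rw [hcol]
    exact add_mem (Submodule.mem_sup_left (mulVec_mem_colSpan _ _))
      (Submodule.mem_sup_right (mulVec_mem_colSpan _ _))
  obtain ⟨u, hu, hu1, a, ha, hca⟩ := exists_enorm_eq_one_dotProduct_eq_mul _ (hmem i.2) hc
  have hd0 : 0 ≤ enorm (Dᵀ i) := Real.sqrt_nonneg _
  have ha0 : 0 ≤ a := (inv_nonneg.mpr hd0).trans ha
  have hp0 : 0 ≤ p := zero_le_one.trans hp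
  calc Dmin D Smat Ud p / enorm (Dᵀ i) ^ p
      = Dmin D Smat Ud p * (enorm (Dᵀ i))⁻¹ ^ p := by rw [Real.inv_rpow hd0, div_eq_mul_inv]
    _ ≤ (∑ t : Fin n, |u ⬝ᵥ Dᵀ (i.1, t)| ^ p) * a ^ p :=
        mul_le_mul (Dmin_le D Smat Ud p hu hu1) (Real.rpow_le_rpow (inv_nonneg.mpr hd0) ha hp0)
          (by positivity) (Finset.sum_nonneg fun t _ => by positivity)
    _ = ∑ t : Fin n, |Dᵀ (i.1, t) ⬝ᵥ c| ^ p := by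
        rw [mul_comm, Finset.mul_sum]
        refine Finset.sum_congr rfl fun t _ => ?_
        rw [hca _ (hmem t), abs_mul, abs_of_nonneg ha0, Real.mul_rpow ha0 (abs_nonneg _)]

/-- lower bound `‖D_{kᵢ}ᵀ c‖_p^p ≥ Δ_min / ‖dᵢ‖₂^p` for any feasible `c`. -/
theorem statement15 (M₁ m n r s : ℕ) (hm : 1 < m) (hn : 0 < n) (hsr : s ≤ r)
    (p : ℝ) (hp : 1 ≤ p)
    (D : Matrix (Fin M₁) (Fin m × Fin n) ℝ)
    (Smat : Matrix (Fin M₁) (Fin s) ℝ)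
    (Ud : Fin m → Matrix (Fin M₁) (Fin (r - s)) ℝ)
    (α : Fin m × Fin n → Fin s → ℝ) (β : Fin m × Fin n → Fin (r - s) → ℝ)
    (hSo : Smatᵀ * Smat = 1)
    (hUo : ∀ j, (Ud j)ᵀ * Ud j = 1)
    (hSU : ∀ j, Smatᵀ * Ud j = 0)
    (hnsub : ∀ i j : Fin m, i ≠ j →
      ¬ (colSpan Smat ⊔ colSpan (Ud i) ≤ colSpan Smat ⊔ colSpan (Ud j)))
    (hcap : ∀ i j : Fin m, i ≠ j →
      (colSpan Smat ⊔ colSpan (Ud i)) ⊓ (colSpan Smat ⊔ colSpan (Ud j)) = colSpan Smat)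
    (hcol : ∀ i : Fin m × Fin n, Dᵀ i = Smat.mulVec (α i) + (Ud i.1).mulVec (β i))
    (i : Fin m × Fin n) (hdi : Dᵀ i ≠ 0)
    (c : Fin M₁ → ℝ) (hc : dotProduct c (Dᵀ i) = 1) :
    Dmin D Smat Ud p / enorm (Dᵀ i) ^ p ≤ ∑ t : Fin n, |dotProduct (Dᵀ (i.1, t)) c| ^ p :=
  statement15_general M₁ m n r s p hp D Smat Ud α β hcol i c hc

end Paper
end
end
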